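/- arXiv:1511.09229 — 5 statements merged into one kernel-verified Lean document; each statement's English description precedes it below -/
import Mathlib

section
/- (Fine–Wilf periodicity lemma) If a string p of length m has periods π₁ and π₂ with π₁ + π₂ − gcd(π₁, π₂) ≤ m, then p also has period gcd(π₁, π₂). -/
def HasPeriod {α : Type*} (m : ℕ) (p : ℕ → α) (π : ℕ) : Prop :=
  1 ≤ π ∧ π ≤ m ∧ ∀ x, π < x → x ≤ m → p x = p (x - π)

lemma mult_period {α : Type*} (M g : ℕ) (p : ℕ → α)
    (hp : ∀ y, g < y → y ≤ M → p y = p (y - g)) :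
    ∀ k x, 0 < g → g * k < x → x ≤ M → p x = p (x - g * k) := by
  intro k
  induction k with
  | zero => intro x _ _ _; simp
  | succ k ihk =>
    intro x hg hkx hxM
    have hmul : g * (k + 1) = g * k + g := by ring
    have hgx : g < x := by omega
    have e1 : p x = p (x - g) := hp x hgx hxM
    have e2 : p (x - g) = p (x - g - g * k) := ihk (x - g) hg (by omega) (by omega)
    rw [e1, e2]
    congr 1
    omega

theorem fw_aux : ∀ (n : ℕ) {α : Type*} (m : ℕ) (p : ℕ → α) (a b : ℕ),
    a + b ≤ n → HasPeriod m p a → HasPeriod m p b →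
    a + b - Nat.gcd a b ≤ m → HasPeriod m p (Nat.gcd a b) := by
  intro n
  induction n with
  | zero =>
    intro α m p a b hn h1 _ _
    have := h1.1; omega
  | succ n ih =>
    intro α m p a0 b0 hn0 h10 h20 h0
    have main : ∀ (a b : ℕ),
        a + b ≤ n + 1 → b < a → HasPeriod m p a → HasPeriod m p b →
        a + b - Nat.gcd a b ≤ m → HasPeriod m p (Nat.gcd a b) := by
      intro a b hn hab h1 h2 h
      obtain ⟨ha1, ham, hpa⟩ := h1
      obtain ⟨hb1, hbm, hpb⟩ := h2
      set g := Nat.gcd a b with hgdef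
      have hga : g ∣ a := Nat.gcd_dvd_left a b
      have hgb : g ∣ b := Nat.gcd_dvd_right a b
      have hg1 : 1 ≤ g := Nat.gcd_pos_of_pos_left _ (by omega)
      have hgleb : g ≤ b := Nat.le_of_dvd (by omega) hgb
      have hgab : g ∣ a - b := Nat.dvd_sub hga hgb
      have habg : b + g ≤ a := by
        have := Nat.le_of_dvd (by omega : 0 < a - b) hgab
        omega
      have hgcd' : Nat.gcd (a - b) b = g := Nat.gcd_sub_self_left (le_of_lt hab)
      -- p has period a - b on prefix of length m - b
      have key1 : ∀ x, a - b < x → x ≤ m - b → p x = p (x - (a - b)) := by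
        intro x hx hxm
        have e1 : p (x + b) = p x := by
          have := hpb (x + b) (by omega) (by omega)
          simpa using this
        have e2 : p (x + b) = p (x + b - a) := hpa (x + b) (by omega) (by omega)
        have e3 : x + b - a = x - (a - b) := by omega
        rw [← e1, e2, e3]
      have H1 : HasPeriod (m - b) p (a - b) := ⟨by omega, by omega, key1⟩
      have H2 : HasPeriod (m - b) p b :=
        ⟨hb1, by omega, fun x hx hxm => hpb x hx (by omega)⟩
      have Hpre := ih (m - b) p (a - b) b (by omega) H1 H2 (by rw [hgcd']; omega)
      rw [hgcd'] at Hpre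
      obtain ⟨-, -, hpg⟩ := Hpre
      have hmbb : b ≤ m - b := by omega
      have claim : ∀ x, x ≤ m → g < x → p x = p (x - g) := by
        intro x
        induction x using Nat.strong_induction_on with
        | _ x ihx =>
          intro hxm hgx
          by_cases hx' : x ≤ m - b
          · exact hpg x hgx hx'
          · have hbx : b < x := by omega
            have e1 : p x = p (x - b) := hpb x hbx hxm
            by_cases hxg : x - g ≤ m - b
            · rcases eq_or_lt_of_le hgleb with hbg | hbg
              · rw [e1, hbg]
              · obtain ⟨k, hk⟩ := Nat.dvd_sub hgb (dvd_refl g)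
                have hk0 : 0 < g * k := by omega
                have e4 : p (x - g) = p (x - g - g * k) :=
                  mult_period (m - b) g p hpg k (x - g) (by omega) (by omega) hxg
                rw [e1, e4]
                congr 1
                omega
            · have hx2 : b + g < x := by omega
              have e2 : p (x - g) = p (x - g - b) := hpb (x - g) (by omega) (by omega)
              have e3 : p (x - b) = p (x - b - g) := ihx (x - b) (by omega) (by omega) (by omega)
              rw [e1, e3, e2]
              congr 1
              omega
      exact ⟨hg1, by omega, fun x hx hxm => claim x hxm hx⟩
    rcases lt_trichotomy a0 b0 with hab | rfl | hab
    · rw [Nat.gcd_comm]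
      exact main b0 a0 (by omega) hab h20 h10
        (by rw [Nat.gcd_comm, Nat.add_comm]; exact h0)
    · simpa [Nat.gcd_self] using h10
    · exact main a0 b0 hn0 hab h10 h20 h0

/-- Fine–Wilf periodicity lemma. -/
theorem fine_wilf {α : Type*} (m : ℕ) (p : ℕ → α) (π₁ π₂ : ℕ)
    (h1 : HasPeriod m p π₁) (h2 : HasPeriod m p π₂)
    (h : π₁ + π₂ - Nat.gcd π₁ π₂ ≤ m) :
    HasPeriod m p (Nat.gcd π₁ π₂) :=
  fw_aux (π₁ + π₂) m p π₁ π₂ le_rfl h1 h2 h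
end

section
/- Let p be a string of length m whose shortest period is π, and let k be an integer with 1 ≤ k ≤ min(π − 1, m/3). Then p contains a substring of length 3k whose shortest period is greater than k. -/
def ShortestPeriod {α : Type*} (m : ℕ) (p : ℕ → α) (π : ℕ) : Prop :=
  HasPeriod m p π ∧ ∀ π', HasPeriod m p π' → π ≤ π'

/-- `p` has period `q` on positions `[l, r]`, stated additively. -/
def Per {α : Type*} (p : ℕ → α) (l r q : ℕ) : Prop :=
  ∀ x, l ≤ x → x + q ≤ r → p (x + q) = p x

lemma per_mono {α : Type*} {p : ℕ → α} {l r l' r' q : ℕ} (h : Per p l r q)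
    (h1 : l ≤ l') (h2 : r' ≤ r) : Per p l' r' q :=
  fun x hx hxr => h x (h1.trans hx) (hxr.trans h2)

lemma per_iter {α : Type*} {p : ℕ → α} {l r q : ℕ} (h : Per p l r q) :
    ∀ t x, l ≤ x → x + t * q ≤ r → p (x + t * q) = p x := by
  intro t
  induction t with
  | zero => simp
  | succ n ih =>
      intro x hx hr
      have h1 : x + (n + 1) * q = (x + q) + n * q := by ring
      have h2 : (n + 1) * q = n * q + q := by ring
      have hnq : x + q + n * q ≤ r := by omega
      rw [h1, ih (x + q) (by omega) hnq]
      exact h x hx (by omega)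

lemma per_iter' {α : Type*} {p : ℕ → α} {l r q s : ℕ} (h : Per p l r q) (hs : q ∣ s) :
    ∀ x, l ≤ x → x + s ≤ r → p (x + s) = p x := by
  obtain ⟨t, rfl⟩ := hs
  intro x hx hr
  have e : q * t = t * q := by ring
  rw [e] at hr ⊢
  exact per_iter h t x hx hr

lemma per_sub {α : Type*} {p : ℕ → α} {l r a b : ℕ} (ha : 1 ≤ a) (hab : a < b)
    (hsum : l + a + b ≤ r + 1) (hA : Per p l r a) (hB : Per p l r b) :
    Per p l r (b - a) := by
  intro x hx hxr
  by_cases hc : x + b ≤ r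
  · have e1 := hB x hx hc
    have e2 := hA (x + (b - a)) (by omega) (by omega)
    have e3 : x + (b - a) + a = x + b := by omega
    rw [e3] at e2
    rw [← e2, e1]
  · have e1 := hA (x - a) (by omega) (by omega)
    have e2 := hB (x - a) (by omega) (by omega)
    have e3 : x - a + a = x := by omega
    have e4 : x - a + b = x + (b - a) := by omega
    rw [e3] at e1
    rw [e4] at e2
    rw [e2, ← e1]

lemma per_gcd {α : Type*} {p : ℕ → α} :
    ∀ n a b l r, a + b ≤ n → 1 ≤ a → 1 ≤ b → l + a + b ≤ r + 1 →
      Per p l r a → Per p l r b → Per p l r (Nat.gcd a b) := by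
  intro n
  induction n with
  | zero => intro a b l r h ha hb; omega
  | succ n ih =>
      intro a b l r hn ha hb hsum hA hB
      rcases lt_trichotomy a b with h | h | h
      · have hs := per_sub ha h hsum hA hB
        have hg : Nat.gcd a (b - a) = Nat.gcd a b := Nat.gcd_sub_self_right h.le
        rw [← hg]
        exact ih a (b - a) l r (by omega) ha (by omega) (by omega) hA hs
      · subst h
        rw [Nat.gcd_self]
        exact hA
      · have hs := per_sub hb h (by omega) hB hA
        have hg : Nat.gcd b (a - b) = Nat.gcd b a := Nat.gcd_sub_self_right h.le
        rw [Nat.gcd_comm, ← hg]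
        exact ih b (a - b) l r (by omega) hb (by omega) (by omega) hB hs

lemma exists_mul_between (d G : ℕ) (hG : 1 ≤ G) :
    ∃ s, G ∣ s ∧ d ≤ s ∧ s < d + G := by
  induction d with
  | zero => exact ⟨0, dvd_zero G, le_refl 0, by omega⟩
  | succ n ih =>
      obtain ⟨s, hdvd, h1, h2⟩ := ih
      by_cases hc : n < s
      · exact ⟨s, hdvd, by omega, by omega⟩
      · have hsn : s = n := by omega
        exact ⟨s + G, Dvd.dvd.add hdvd dvd_rfl, by omega, by omega⟩

lemma per_left_ext {α : Type*} {p : ℕ → α} {R L G g : ℕ} (hG : 1 ≤ G) (hg : 1 ≤ g)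
    (hpre : Per p 1 R G) (hov : Per p L R g) (hlen : L + G + g ≤ R + 1) :
    Per p 1 R g := by
  intro x hx hxr
  by_cases hc : L ≤ x
  · exact hov x hc hxr
  · obtain ⟨s, hdvd, h1, h2⟩ := exists_mul_between (L - x) G hG
    have e1 := per_iter' hpre hdvd x hx (by omega)
    have e2 := per_iter' hpre hdvd (x + g) (by omega) (by omega)
    have e3 := hov (x + s) (by omega) (by omega)
    have e4 : x + s + g = x + g + s := by omega
    rw [e4] at e3
    rw [← e2, e3, e1]

lemma per_snoc {α : Type*} {p : ℕ → α} {L R g q : ℕ} (hg : 1 ≤ g) (hq : 1 ≤ q)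
    (hdvd : g ∣ q) (hov : Per p L R g) (hwin : Per p L (R + 1) q)
    (hLq : L + q ≤ R + 1) (hpre : Per p 1 R g) : Per p 1 (R + 1) g := by
  intro x hx hxr
  by_cases hc : x + g ≤ R
  · exact hpre x hx hc
  · have hx' : x + g = R + 1 := by omega
    have hgq : g ≤ q := Nat.le_of_dvd (by omega) hdvd
    have e1 := hwin (x + g - q) (by omega) (by omega)
    have e2 := per_iter' hov (Nat.dvd_sub hdvd dvd_rfl) (x + g - q) (by omega) (by omega)
    have ea : x + g - q + q = x + g := by omega
    have eb : x + g - q + (q - g) = x := by omega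
    rw [ea] at e1
    rw [eb] at e2
    rw [e1, ← e2]

lemma window_per {α : Type*} {p : ℕ → α} {a q m' : ℕ} (ha : 1 ≤ a)
    (h : HasPeriod m' (fun x => p (a + x - 1)) q) : Per p a (a + m' - 1) q := by
  intro x hx hxr
  have hq1 : 1 ≤ q := h.1
  have hqm : q ≤ m' := h.2.1
  have h3 := h.2.2 (x - a + 1 + q) (by omega) (by omega)
  simp only at h3
  have e1 : a + (x - a + 1 + q) - 1 = x + q := by omega
  have e2 : a + (x - a + 1 + q - q) - 1 = x := by omega
  rw [e1, e2] at h3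
  exact h3

/-- If the shortest period of `p[1..m]` is `π` and `1 ≤ k ≤ min(π-1, m/3)`,
then `p` has a substring of length `3k` whose shortest period exceeds `k`. -/
theorem exists_substring_long_period {α : Type*} (m : ℕ) (p : ℕ → α) (π k : ℕ)
    (hsp : ShortestPeriod m p π) (hk1 : 1 ≤ k) (hk2 : k ≤ π - 1) (hk3 : 3 * k ≤ m) :
    ∃ a, 1 ≤ a ∧ a + 3 * k - 1 ≤ m ∧
      ∀ π', HasPeriod (3 * k) (fun x => p (a + x - 1)) π' → k < π' := by
  by_contra hcon
  push_neg at hcon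
  have hpi1 : 1 ≤ π := hsp.1.1
  have key : ∀ n, 3 * k ≤ n → n ≤ m → ∃ G, 1 ≤ G ∧ G ≤ k ∧ Per p 1 n G := by
    intro n
    induction n with
    | zero => intro h1 h2; omega
    | succ n ih =>
        intro h1 h2
        by_cases hbase : 3 * k = n + 1
        · obtain ⟨q, hq, hqk⟩ := hcon 1 le_rfl (by omega)
          have hper := window_per le_rfl hq
          have e : 1 + 3 * k - 1 = n + 1 := by omega
          rw [e] at hper
          exact ⟨q, hq.1, hqk, hper⟩
        · have h1' : 3 * k ≤ n := by omega
          obtain ⟨G, hG1, hGk, hGper⟩ := ih h1' (by omega)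
          set a := n + 1 - 3 * k with hadef
          have ha3 : a + 3 * k = n + 1 := by omega
          obtain ⟨q, hq, hqk⟩ := hcon (a + 1) (by omega) (by omega)
          have hq1 : 1 ≤ q := hq.1
          have hwin : Per p (a + 1) (n + 1) q := by
            have := window_per (a := a + 1) (by omega) hq
            have e : a + 1 + 3 * k - 1 = n + 1 := by omega
            rwa [e] at this
          have hov1 : Per p (a + 1) n G := per_mono hGper (by omega) le_rfl
          have hov2 : Per p (a + 1) n q := per_mono hwin le_rfl (by omega)
          have hgcd : Per p (a + 1) n (Nat.gcd G q) :=
            per_gcd (G + q) G q (a + 1) n le_rfl hG1 hq1 (by omega) hov1 hov2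
          have hg1 : 1 ≤ Nat.gcd G q := Nat.gcd_pos_of_pos_left q hG1
          have hgk : Nat.gcd G q ≤ k :=
            le_trans (Nat.gcd_le_left q hG1) hGk
          have hgG : Nat.gcd G q ≤ G := Nat.gcd_le_left q hG1
          have hpre' : Per p 1 n (Nat.gcd G q) :=
            per_left_ext hG1 hg1 hGper hgcd (by omega)
          have hfin : Per p 1 (n + 1) (Nat.gcd G q) :=
            per_snoc hg1 hq1 (Nat.gcd_dvd_right G q) hgcd hwin (by omega) hpre'
          exact ⟨Nat.gcd G q, hg1, hgk, hfin⟩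
  obtain ⟨G, hG1, hGk, hGper⟩ := key m hk3 le_rfl
  have hHP : HasPeriod m p G := by
    refine ⟨hG1, by omega, fun x hx1 hx2 => ?_⟩
    have := hGper (x - G) (by omega) (by omega)
    have e : x - G + G = x := by omega
    rw [e] at this
    exact this
  have := hsp.2 G hHP
  omega
end

section
/- Suppose a string p of length m has shortest period π. If π' < π were a period of the prefix p[1..2π−1], then gcd(π, π') would be a period of p, contradicting minimality of π. Formally: if p has period π with 2π−1 ≤ m, and the prefix p[1..2π−1] has a period π' ≤ π−1, then p has period gcd(π, π'). -/
/-- Extension lemma: if `g` is a period on `[1..N]`, `b` is a period on `[1..L]`,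
`g ∣ b`, `b ≤ N ≤ L`, then `g` is a period on `[1..L]`. -/
lemma ext_period {α : Type*} (p : ℕ → α) (g b N L : ℕ) (hg : 1 ≤ g) (hb : 1 ≤ b)
    (hdvd : g ∣ b) (hbN : b ≤ N) (hNL : N ≤ L)
    (Hg : ∀ x, g < x → x ≤ N → p x = p (x - g))
    (Hb : ∀ x, b < x → x ≤ L → p x = p (x - b)) :
    ∀ x, g < x → x ≤ L → p x = p (x - g) := by
  intro x
  induction x using Nat.strong_induction_on with
  | _ x IH =>
    intro hgx hxL
    by_cases hxN : x ≤ N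
    · exact Hg x hgx hxN
    · push_neg at hxN
      obtain ⟨k, hk⟩ := hdvd
      have hk1 : 1 ≤ k := by
        rcases Nat.eq_zero_or_pos k with h0 | h
        · subst h0; omega
        · exact h
      have hbx : b < x := lt_of_le_of_lt hbN hxN
      have h1 : p x = p (x - b) := Hb x hbx hxL
      have chain : ∀ j, 1 ≤ j → j ≤ k → p (x - g) = p (x - g * j) := by
        intro j
        induction j with
        | zero => intro h; omega
        | succ j IHj =>
          intro _ h2
          rcases Nat.eq_zero_or_pos j with rfl | hj
          · simp
          · have e1 : p (x - g) = p (x - g * j) := IHj hj (by omega)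
            have hmul : g * (j + 1) ≤ g * k := Nat.mul_le_mul_left g h2
            have hgj1 : 1 ≤ g * j := Nat.one_le_iff_ne_zero.mpr (by positivity)
            have hy_lt : x - g * j < x := by omega
            have hgy : g < x - g * j := by
              have : g * (j + 1) = g * j + g := by ring
              omega
            have step : p (x - g * j) = p (x - g * j - g) :=
              IH (x - g * j) hy_lt hgy (by omega)
            rw [e1, step]
            congr 1
            have : g * (j + 1) = g * j + g := by ring
            omega
      have h2 : p (x - g) = p (x - b) := by
        have := chain k hk1 le_rfl
        rwa [← hk] at this
      rw [h1, h2]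

/-- Fine–Wilf: if `a, b` are periods on `[1..L]` with `1 ≤ b ≤ a` and
`a + b - gcd a b ≤ L`, then `gcd a b` is a period on `[1..L]`. -/
lemma fine_wilf_s7 {α : Type*} : ∀ n, ∀ (a b L : ℕ) (p : ℕ → α), a + b ≤ n → 1 ≤ b → b ≤ a →
    a + b - Nat.gcd a b ≤ L →
    (∀ x, a < x → x ≤ L → p x = p (x - a)) →
    (∀ x, b < x → x ≤ L → p x = p (x - b)) →
    ∀ x, Nat.gcd a b < x → x ≤ L → p x = p (x - Nat.gcd a b) := by
  intro n
  induction n using Nat.strong_induction_on with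
  | _ n IH =>
    intro a b L p hab hb hba hL Ha Hb
    by_cases heq : a = b
    · subst heq
      rw [Nat.gcd_self]
      exact Ha
    · have hba' : b < a := lt_of_le_of_ne hba (Ne.symm heq)
      have hg : 1 ≤ Nat.gcd a b := Nat.gcd_pos_of_pos_right a hb
      have hga : Nat.gcd a b ∣ a := Nat.gcd_dvd_left a b
      have hgb : Nat.gcd a b ∣ b := Nat.gcd_dvd_right a b
      have hgleb : Nat.gcd a b ≤ b := Nat.le_of_dvd hb hgb
      have hgab : Nat.gcd a b ∣ a - b := Nat.dvd_sub hga hgb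
      have habg : b + Nat.gcd a b ≤ a := by
        have : Nat.gcd a b ≤ a - b := Nat.le_of_dvd (by omega) hgab
        omega
      -- a - b is a period on [1 .. L - b]
      have Ha' : ∀ x, a - b < x → x ≤ L - b → p x = p (x - (a - b)) := by
        intro x h1 h2
        have hx_b : x + b ≤ L := by omega
        have e1 : p (x + b) = p x := by
          have := Hb (x + b) (by omega) hx_b
          simpa using this
        have e2 : p (x + b) = p (x + b - a) := Ha (x + b) (by omega) hx_b
        have e3 : x + b - a = x - (a - b) := by omega
        rw [← e1, e2, e3]
      have Hb' : ∀ x, b < x → x ≤ L - b → p x = p (x - b) :=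
        fun x h1 h2 => Hb x h1 (by omega)
      -- recursive call on the ordered pair (max, min) of (a - b, b)
      have hgeq : Nat.gcd (a - b) b = Nat.gcd a b := by
        exact Nat.gcd_sub_self_left (m := b) (n := a) (le_of_lt hba')
      have Hgsmall : ∀ x, Nat.gcd a b < x → x ≤ L - b → p x = p (x - Nat.gcd a b) := by
        rcases le_total b (a - b) with hcase | hcase
        · have := IH a (by omega) (a - b) b (L - b) p (by omega) hb hcase
            (by rw [hgeq]; omega) Ha' Hb'
          rwa [hgeq] at this
        · have hgeq2 : Nat.gcd b (a - b) = Nat.gcd a b := by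
            rw [Nat.gcd_comm, hgeq]
          have := IH a (by omega) b (a - b) (L - b) p (by omega) (by omega) hcase
            (by rw [hgeq2]; omega) Hb' Ha'
          rwa [hgeq2] at this
      -- extend from [1 .. L - b] to [1 .. L]
      exact ext_period p (Nat.gcd a b) b (L - b) L hg hb hgb (by omega) (by omega) Hgsmall Hb

/-- If `p[1..m]` has period `π` with `2π-1 ≤ m`, and the prefix `p[1..2π-1]`
has a period `π' ≤ π-1`, then `p` has period `gcd(π, π')`. -/
theorem prefix_period_gcd {α : Type*} (m : ℕ) (p : ℕ → α) (π π' : ℕ)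
    (hp : HasPeriod m p π) (h : 2 * π - 1 ≤ m)
    (hp' : HasPeriod (2 * π - 1) p π') (hlt : π' ≤ π - 1) :
    HasPeriod m p (Nat.gcd π π') := by
  obtain ⟨hπ1, hπm, Hπ⟩ := hp
  obtain ⟨hπ'1, hπ'2, Hπ'⟩ := hp'
  have hππ' : π' < π := by omega
  have hg : 1 ≤ Nat.gcd π π' := Nat.gcd_pos_of_pos_right π hπ'1
  have hgπ : Nat.gcd π π' ∣ π := Nat.gcd_dvd_left π π'
  have hgle : Nat.gcd π π' ≤ π := Nat.le_of_dvd (by omega) hgπ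
  have Hπpre : ∀ x, π < x → x ≤ 2 * π - 1 → p x = p (x - π) :=
    fun x h1 h2 => Hπ x h1 (by omega)
  have Hgpre : ∀ x, Nat.gcd π π' < x → x ≤ 2 * π - 1 → p x = p (x - Nat.gcd π π') :=
    fine_wilf_s7 (π + π') π π' (2 * π - 1) p le_rfl hπ'1 (by omega) (by omega) Hπpre Hπ'
  refine ⟨hg, by omega, ?_⟩
  exact ext_period p (Nat.gcd π π') π (2 * π - 1) m hg hπ1 hgπ (by omega) h Hgpre Hπ
end

section
/- Let s be a binary string of length r, and let s' be its (2k+1)-repetition encoding (each bit duplicated 2k+1 consecutive times), of length r(2k+1). Suppose s'' is obtained from s' by at most k edit operations (insertions, deletions, substitutions of single characters). Divide s'' into consecutive blocks of length exactly 2k+1 (the i-th block covering positions (i−1)(2k+1)+1 through i(2k+1), for i = 1,…,r; these positions exist whenever |s''| ≥ r(2k+1) − k and we only consider positions present). Then for each i ≤ r such that the i-th block is fully contained in s'', the majority bit of that block equals s[i]. -/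
/-!
A single edit changes the number of occurrences of a symbol `b` in any fixed window of positions
`[p, p + n)` by at most one: a substitution changes one entry of the window, while an insertion or
deletion shifts the window's contents by one position. Hence the count of `b` in a window of `ys`
is at least its count in the same window of `xs` minus `levenshtein xs ys`. In the
`(2k+1)`-repetition encoding of `s`, the `i`-th window is `(s i)^(2k+1)`, so after at most `k`
edits the same window still contains `s i` at least `k + 1` times.
-/

/-- A cost function for Levenshtein distance (as in the former Mathlib
`Mathlib/Data/List/EditDistance/Defs.lean`, since removed from Mathlib). -/
structure Levenshtein.Cost (α β δ : Type*) where
  /-- Cost to delete an element from a list. -/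
  delete : α → δ
  /-- Cost to insert an element into a list. -/
  insert : β → δ
  /-- Cost to substitute one element for another in a list. -/
  substitute : α → β → δ

/-- The default cost structure, for which all operations cost `1`. -/
def Levenshtein.defaultCost {α : Type*} [DecidableEq α] : Levenshtein.Cost α α ℕ where
  delete _ := 1
  insert _ := 1
  substitute a b := if a = b then 0 else 1

/-- (Implementation detail for `levenshtein`) -/
def Levenshtein.impl {α β δ : Type*} [AddZeroClass δ] [Min δ]
    (C : Levenshtein.Cost α β δ)
    (xs : List α) (y : β) (d : {r : List δ // 0 < r.length}) : {r : List δ // 0 < r.length} :=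
  let ⟨ds, w⟩ := d
  xs.zip (ds.zip ds.tail) |>.foldr
    (init := ⟨[C.insert y + ds.getLast (List.ne_nil_of_length_pos w)], by simp⟩)
    (fun ⟨x, d₀, d₁⟩ ⟨r, w⟩ =>
      ⟨min (C.delete x + r[0]) (min (C.insert y + d₀) (C.substitute x y + d₁)) :: r, by simp⟩)

/-- `suffixLevenshtein C xs ys` computes the Levenshtein distance
from each suffix of the list `xs` to the list `ys`. -/
def suffixLevenshtein {α β δ : Type*} [AddZeroClass δ] [Min δ]
    (C : Levenshtein.Cost α β δ) (xs : List α) (ys : List β) :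
    {r : List δ // 0 < r.length} :=
  ys.foldr
    (Levenshtein.impl C xs)
    (xs.foldr (init := ⟨[0], by simp⟩)
      (fun a ⟨ds, w⟩ => ⟨(C.delete a + ds[0]) :: ds, by simp⟩))

/-- The Levenshtein distance between two lists, with respect to a cost structure. -/
def levenshtein {α β δ : Type*} [AddZeroClass δ] [Min δ]
    (C : Levenshtein.Cost α β δ) (xs : List α) (ys : List β) : δ :=
  let ⟨r, w⟩ := suffixLevenshtein C xs ys
  r[0]

namespace Levenshtein

section
variable {α : Type*} [DecidableEq α] (a b : α)

@[simp] theorem defaultCost_delete : (defaultCost : Cost α α ℕ).delete a = 1 := rfl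
@[simp] theorem defaultCost_insert : (defaultCost : Cost α α ℕ).insert a = 1 := rfl
@[simp] theorem defaultCost_substitute :
    (defaultCost : Cost α α ℕ).substitute a b = if a = b then 0 else 1 := rfl

end

section
variable {α β δ : Type*} [AddZeroClass δ] [Min δ] (C : Cost α β δ)

theorem impl_cons (x : α) (xs : List α) (y : β) (d : δ) (ds : {r : List δ // 0 < r.length}) :
    (impl C (x :: xs) y ⟨d :: ds.1, by simp⟩).1 =
      min (C.delete x + (impl C xs y ds).1[0]'(impl C xs y ds).2)
        (min (C.insert y + d) (C.substitute x y + ds.1[0]'ds.2)) :: (impl C xs y ds).1 := by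
  rcases ds with ⟨_ | ⟨d', ds⟩, hpos⟩
  · simp at hpos
  · rfl

end

end Levenshtein

open Levenshtein

section
variable {α β δ : Type*} [AddZeroClass δ] [Min δ] (C : Cost α β δ)

theorem levenshtein_eq_getElem_zero (xs : List α) (ys : List β) :
    levenshtein C xs ys = (suffixLevenshtein C xs ys).1[0]'(suffixLevenshtein C xs ys).2 :=
  rfl

theorem suffixLevenshtein_cons_right (xs : List α) (y : β) (ys : List β) :
    suffixLevenshtein C xs (y :: ys) = impl C xs y (suffixLevenshtein C xs ys) :=
  rfl

theorem suffixLevenshtein_cons_left (x : α) (xs : List α) (ys : List β) :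
    suffixLevenshtein C (x :: xs) ys =
      ⟨levenshtein C (x :: xs) ys :: (suffixLevenshtein C xs ys).1, by simp⟩ := by
  induction ys with
  | nil => rfl
  | cons y ys ih =>
    have h := congrArg Subtype.val (congrArg (impl C (x :: xs) y) ih)
    rw [impl_cons] at h
    apply Subtype.ext
    simp only [levenshtein_eq_getElem_zero, suffixLevenshtein_cons_right, h, List.getElem_cons_zero]

theorem levenshtein_cons_nil (x : α) (xs : List α) :
    levenshtein C (x :: xs) ([] : List β) = C.delete x + levenshtein C xs [] := rfl

theorem levenshtein_cons_cons (x : α) (xs : List α) (y : β) (ys : List β) :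
    levenshtein C (x :: xs) (y :: ys) =
      min (C.delete x + levenshtein C xs (y :: ys))
        (min (C.insert y + levenshtein C (x :: xs) ys) (C.substitute x y + levenshtein C xs ys)) := by
  simp only [levenshtein_eq_getElem_zero C (x :: xs), suffixLevenshtein_cons_right]
  simp only [suffixLevenshtein_cons_left, impl_cons, List.getElem_cons_zero]
  rfl

end

namespace List

variable {α : Type*}

theorem count_take_succ_le [BEq α] (b : α) (l : List α) (n : ℕ) :
    (l.take (n + 1)).count b ≤ (l.take n).count b + 1 := by
  rw [take_add_one, count_append]
  have : l[n]?.toList.count b ≤ 1 := count_le_length.trans (by cases l[n]? <;> simp)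
  omega

theorem count_take_cons_le [BEq α] (b a : α) (l : List α) (n : ℕ) :
    ((a :: l).take n).count b ≤ (l.take n).count b + 1 := by
  cases n with
  | zero => simp
  | succ n =>
    have : (l.take n).count b ≤ (l.take (n + 1)).count b :=
      (take_sublist_take_left (by omega)).count_le b
    rw [take_succ_cons, count_cons]
    split <;> omega

theorem count_take_le_count_take_cons [BEq α] (b a : α) (l : List α) (n : ℕ) :
    (l.take n).count b ≤ ((a :: l).take n).count b + 1 := by
  have h : (l.take n).count b ≤ ((a :: l).take (n + 1)).count b := by
    rw [take_succ_cons, count_cons]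
    omega
  have := count_take_succ_le b (a :: l) n
  omega

theorem count_take_drop_cons_le [BEq α] (b a : α) (l : List α) (p n : ℕ) :
    (((a :: l).drop p).take n).count b ≤ ((l.drop p).take n).count b + 1 := by
  induction p generalizing a l with
  | zero => exact count_take_cons_le b a l n
  | succ p ih =>
    cases l with
    | nil => simp
    | cons c l => exact ih c l

theorem count_take_drop_le_count_take_drop_cons [BEq α] (b a : α) (l : List α) (p n : ℕ) :
    ((l.drop p).take n).count b ≤ (((a :: l).drop p).take n).count b + 1 := by
  induction p generalizing a l with
  | zero => exact count_take_le_count_take_cons b a l n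
  | succ p ih =>
    cases l with
    | nil => simp
    | cons c l => exact ih c l

theorem take_drop_mul_flatMap_replicate (l : List α) (n i : ℕ) (hi : i < l.length) :
    ((l.flatMap (replicate n)).drop (i * n)).take n = replicate n l[i] := by
  induction l generalizing i with
  | nil => simp at hi
  | cons a l ih =>
    cases i with
    | zero => simp
    | succ i =>
      have hi' : i < l.length := by simpa using hi
      simp [Nat.succ_mul, drop_append, ih i hi']

theorem count_take_drop_cons_le_cons_add [DecidableEq α] (b a c : α) (xs ys : List α) (d : ℕ)
    (hd : ∀ p n, ((xs.drop p).take n).count b ≤ ((ys.drop p).take n).count b + d) (p n : ℕ) :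
    (((a :: xs).drop p).take n).count b ≤
      (((c :: ys).drop p).take n).count b + ((if a = c then 0 else 1) + d) := by
  cases p with
  | succ p =>
    have := hd p n
    simp only [drop_succ_cons]
    omega
  | zero =>
    cases n with
    | zero => simp
    | succ n =>
      have := hd 0 n
      simp only [drop_zero, take_succ_cons, count_cons] at this ⊢
      by_cases hac : a = c
      · subst hac
        omega
      · simp only [if_neg hac]
        split <;> omega

end List

section
variable {α : Type*} [DecidableEq α]

theorem count_take_drop_le_add_levenshtein (b : α) (xs ys : List α) (p n : ℕ) :
    ((xs.drop p).take n).count b ≤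
      ((ys.drop p).take n).count b + levenshtein Levenshtein.defaultCost xs ys := by
  induction xs generalizing ys p n with
  | nil => simp
  | cons a xs ihx =>
    induction ys generalizing p n with
    | nil =>
      have := ihx [] p n
      have := List.count_take_drop_cons_le b a xs p n
      rw [levenshtein_cons_nil]
      simp only [Levenshtein.defaultCost_delete]
      omega
    | cons c ys ihy =>
      rw [levenshtein_cons_cons, ← min_add_add_left, ← min_add_add_left]
      refine le_min ?_ (le_min ?_ ?_)
      · have := ihx (c :: ys) p n
        have := List.count_take_drop_cons_le b a xs p n
        simp only [Levenshtein.defaultCost_delete]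
        omega
      · have := ihy p n
        have := List.count_take_drop_le_count_take_drop_cons b c ys p n
        simp only [Levenshtein.defaultCost_insert]
        omega
      · simp only [Levenshtein.defaultCost_substitute]
        exact List.count_take_drop_cons_le_cons_add b a c xs ys _ (ihx ys) p n

end

/-- Repetition code decoding: if `s'` is the `(2k+1)`-repetition encoding of a
binary string `s` of length `r`, and `s''` is within edit distance `k` of `s'`,
then for every block index `i` whose block of length `2k+1` is fully contained
in `s''`, the majority bit of that block equals `s[i]` (i.e. `s[i]` occurs at
least `k+1` times in the block). -/
theorem repetition_code_majority (k r : ℕ) (s : Fin r → Bool) (s'' : List Bool)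
    (h : levenshtein Levenshtein.defaultCost
          ((List.ofFn s).flatMap (fun b => List.replicate (2 * k + 1) b)) s'' ≤ k) :
    ∀ i : Fin r, (i.val + 1) * (2 * k + 1) ≤ s''.length →
      k + 1 ≤ ((s''.drop (i.val * (2 * k + 1))).take (2 * k + 1)).count (s i) := by
  intro i _
  have hblock := count_take_drop_le_add_levenshtein (s i)
    ((List.ofFn s).flatMap (List.replicate (2 * k + 1))) s'' (i.val * (2 * k + 1)) (2 * k + 1)
  rw [List.take_drop_mul_flatMap_replicate _ _ _ (by simp), List.getElem_ofFn,
    List.count_replicate_self] at hblock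
  have := hblock.trans (Nat.add_le_add_left h _)
  omega
end

section
/- Let T be a text and p a string of length m whose shortest period is π, with π ≤ m/3. If T[i..i+m+π−2] has period π (so both windows below lie in a π-periodic region of T), then there is no j with 0 < j − i < π such that T[i..i+m−1] = T[j..j+m−1] = p, since otherwise p would have the period j − i < π, contradicting π being the shortest period of p. -/
/-- Inside a `π`-periodic region of `T`, two occurrences of a pattern `p` with
shortest period `π ≤ m/3` cannot start at distinct positions less than `π`
apart. -/
theorem no_close_occurrences_in_periodic_region {α : Type*} (T : ℕ → α)
    (m π i j : ℕ) (p : ℕ → α)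
    (hreg : HasPeriod (m + π - 1) (fun x => T (i + x - 1)) π)
    (hocc1 : ∀ x, 1 ≤ x → x ≤ m → T (i + x - 1) = p x)
    (hocc2 : ∀ x, 1 ≤ x → x ≤ m → T (j + x - 1) = p x)
    (hij : i < j) (hjp : j < i + π)
    (hm : 3 * π ≤ m) (hsp : ShortestPeriod m p π) :
    False := by
  set d := j - i with hd
  have hd1 : 1 ≤ d := Nat.le_sub_of_add_le (by omega)
  have hdπ : d < π := by omega
  have hdm : d ≤ m := by omega
  have hper : HasPeriod m p d := by
    refine ⟨hd1, hdm, fun x hx hxm => ?_⟩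
    have h1 : p x = T (i + x - 1) := (hocc1 x (by omega) hxm).symm
    have h2 : p (x - d) = T (j + (x - d) - 1) := (hocc2 (x - d) (by omega) (by omega)).symm
    rw [h1, h2]
    congr 1
    omega
  have := hsp.2 d hper
  omega
end
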